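/- Let τ ↦ (x1(τ), x2(τ), z5(τ), z6(τ)) be a differentiable solution of the averaged ESC closed-loop system. If at some time τ₀ one has z5(τ₀)² + z6(τ₀)² = 1, (x1(τ₀), x2(τ₀)) ≠ (0, 0), and C1 c1 x1(τ₀) z5(τ₀) + C2 c2 x2(τ₀) z6(τ₀) = 0, then the derivative at τ₀ of the function M(τ) = C1 c1 x1(τ) z5(τ) + C2 c2 x2(τ) z6(τ) is strictly positive; in particular it is nonzero. -/

import Mathlib

open Real Filter

/-- The averaged ESC closed-loop system with positive constants `a, k1, k2, ω0, C1, C2, c1, c2`: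
`x1' = −(a k1/ω0) z5 (C1 c1 x1 z5 + C2 c2 x2 z6)`,
`x2' = −(a k1/ω0) z6 (C1 c1 x1 z5 + C2 c2 x2 z6)`,
`z5' = (a k2/ω0) z6 (C1 c1 x1 z6 − C2 c2 x2 z5)`,
`z6' = −(a k2/ω0) z5 (C1 c1 x1 z6 − C2 c2 x2 z5)`, holding for all `τ ∈ s`. -/
def AvgESC (a k1 k2 ω0 C1 C2 c1 c2 : ℝ) (x1 x2 z5 z6 : ℝ → ℝ) (s : Set ℝ) : Prop :=
  ∀ τ ∈ s,
    HasDerivAt x1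
      (-(a * k1 / ω0) * z5 τ * (C1 * c1 * x1 τ * z5 τ + C2 * c2 * x2 τ * z6 τ)) τ ∧
    HasDerivAt x2
      (-(a * k1 / ω0) * z6 τ * (C1 * c1 * x1 τ * z5 τ + C2 * c2 * x2 τ * z6 τ)) τ ∧
    HasDerivAt z5
      ((a * k2 / ω0) * z6 τ * (C1 * c1 * x1 τ * z6 τ - C2 * c2 * x2 τ * z5 τ)) τ ∧
    HasDerivAt z6
      (-(a * k2 / ω0) * z5 τ * (C1 * c1 * x1 τ * z6 τ - C2 * c2 * x2 τ * z5 τ)) τ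

/-!
Differentiating `M = C1 c1 x1 z5 + C2 c2 x2 z6` along the flow gives
`M' = −(a k1/ω0) M (C1 c1 z5² + C2 c2 z6²) + (a k2/ω0) N²` with `N = C1 c1 x1 z6 − C2 c2 x2 z5`,
so `M' = (a k2/ω0) N²` where `M` vanishes. On the unit circle `M² + N² = C1² c1² x1² + C2² c2² x2²`,
hence `N ≠ 0` there as long as `(x1, x2) ≠ 0`.
-/

theorem mul_sub_mul_ne_zero_of_mul_add_mul_eq_zero {K : Type*} [Field K] [LinearOrder K]
    [IsStrictOrderedRing K] {p q u v : K} (huv : u ^ 2 + v ^ 2 ≠ 0) (hpq : (p, q) ≠ (0, 0))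
    (h : p * u + q * v = 0) : p * v - q * u ≠ 0 := by
  intro h'
  have hsum : (p ^ 2 + q ^ 2) * (u ^ 2 + v ^ 2) = 0 := by
    linear_combination (p * u + q * v) * h + (p * v - q * u) * h'
  have hp2q2 : p ^ 2 + q ^ 2 = 0 := (mul_eq_zero.mp hsum).resolve_right huv
  have hp : p = 0 := by nlinarith [sq_nonneg p, sq_nonneg q]
  have hq : q = 0 := by nlinarith [sq_nonneg p, sq_nonneg q]
  exact hpq (by rw [hp, hq])

theorem AvgESC.hasDerivAt_output {a k1 k2 ω0 C1 C2 c1 c2 : ℝ} {x1 x2 z5 z6 : ℝ → ℝ}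
    {s : Set ℝ} (hsol : AvgESC a k1 k2 ω0 C1 C2 c1 c2 x1 x2 z5 z6 s) {τ : ℝ} (hτ : τ ∈ s) :
    HasDerivAt (fun σ => C1 * c1 * x1 σ * z5 σ + C2 * c2 * x2 σ * z6 σ)
      (-(a * k1 / ω0) * (C1 * c1 * x1 τ * z5 τ + C2 * c2 * x2 τ * z6 τ)
          * (C1 * c1 * z5 τ ^ 2 + C2 * c2 * z6 τ ^ 2)
        + (a * k2 / ω0) * (C1 * c1 * x1 τ * z6 τ - C2 * c2 * x2 τ * z5 τ) ^ 2) τ := by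
  obtain ⟨hx1, hx2, hz5, hz6⟩ := hsol τ hτ
  have hfun : (fun σ => C1 * c1 * x1 σ * z5 σ + C2 * c2 * x2 σ * z6 σ)
      = fun σ => C1 * c1 * (x1 σ * z5 σ) + C2 * c2 * (x2 σ * z6 σ) := by
    funext σ
    ring
  rw [hfun]
  exact (((hx1.mul hz5).const_mul (C1 * c1)).add ((hx2.mul hz6).const_mul (C2 * c2))).congr_deriv
    (by ring)

theorem stmt18_general (a k1 k2 ω0 C1 C2 c1 c2 : ℝ)
    (ha : 0 < a) (hk2 : 0 < k2) (hω0 : 0 < ω0)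
    (hC1 : 0 < C1) (hC2 : 0 < C2) (hc1 : 0 < c1) (hc2 : 0 < c2)
    (x1 x2 z5 z6 : ℝ → ℝ)
    (hsol : AvgESC a k1 k2 ω0 C1 C2 c1 c2 x1 x2 z5 z6 Set.univ)
    (τ0 : ℝ)
    (hcircle : z5 τ0 ^ 2 + z6 τ0 ^ 2 = 1)
    (hx : (x1 τ0, x2 τ0) ≠ ((0 : ℝ), (0 : ℝ)))
    (hM0 : C1 * c1 * x1 τ0 * z5 τ0 + C2 * c2 * x2 τ0 * z6 τ0 = 0) :
    0 < deriv (fun σ => C1 * c1 * x1 σ * z5 σ + C2 * c2 * x2 σ * z6 σ) τ0 ∧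
      deriv (fun σ => C1 * c1 * x1 σ * z5 σ + C2 * c2 * x2 σ * z6 σ) τ0 ≠ 0 := by
  have hweighted : (C1 * c1 * x1 τ0, C2 * c2 * x2 τ0) ≠ (0, 0) := by
    intro h
    simp only [Prod.mk.injEq, mul_eq_zero, hC1.ne', hc1.ne', hC2.ne', hc2.ne', false_or] at h
    exact hx (by rw [h.1, h.2])
  have hN : C1 * c1 * x1 τ0 * z6 τ0 - C2 * c2 * x2 τ0 * z5 τ0 ≠ 0 :=
    mul_sub_mul_ne_zero_of_mul_add_mul_eq_zero (hcircle ▸ one_ne_zero) hweighted hM0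
  have hpos : 0 < deriv (fun σ => C1 * c1 * x1 σ * z5 σ + C2 * c2 * x2 σ * z6 σ) τ0 := by
    rw [(hsol.hasDerivAt_output (Set.mem_univ τ0)).deriv, hM0, mul_zero, zero_mul, zero_add]
    positivity
  exact ⟨hpos, hpos.ne'⟩

/-- If at some time `τ₀` a solution of the averaged ESC closed-loop system
satisfies `z5² + z6² = 1`, `(x1, x2) ≠ (0, 0)` and `C1 c1 x1 z5 + C2 c2 x2 z6 = 0`, then the
derivative at `τ₀` of `M(τ) = C1 c1 x1 z5 + C2 c2 x2 z6` is strictly positive; in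
particular it is nonzero. -/
theorem stmt18 (a k1 k2 ω0 C1 C2 c1 c2 : ℝ)
    (ha : 0 < a) (hk1 : 0 < k1) (hk2 : 0 < k2) (hω0 : 0 < ω0)
    (hC1 : 0 < C1) (hC2 : 0 < C2) (hc1 : 0 < c1) (hc2 : 0 < c2)
    (x1 x2 z5 z6 : ℝ → ℝ)
    (hsol : AvgESC a k1 k2 ω0 C1 C2 c1 c2 x1 x2 z5 z6 Set.univ)
    (τ0 : ℝ)
    (hcircle : z5 τ0 ^ 2 + z6 τ0 ^ 2 = 1)
    (hx : (x1 τ0, x2 τ0) ≠ ((0 : ℝ), (0 : ℝ)))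
    (hM0 : C1 * c1 * x1 τ0 * z5 τ0 + C2 * c2 * x2 τ0 * z6 τ0 = 0) :
    0 < deriv (fun σ => C1 * c1 * x1 σ * z5 σ + C2 * c2 * x2 σ * z6 σ) τ0 ∧
      deriv (fun σ => C1 * c1 * x1 σ * z5 σ + C2 * c2 * x2 σ * z6 σ) τ0 ≠ 0 :=
  stmt18_general a k1 k2 ω0 C1 C2 c1 c2 ha hk2 hω0 hC1 hC2 hc1 hc2 x1 x2 z5 z6 hsol τ0 hcircle hx
    hM0
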